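/- arXiv:math/0611007 — 2 statements merged into one kernel-verified Lean document; each statement's English description precedes it below -/
import Mathlib

section
/- Let x > 0 and ε ∈ (0, 1/2). Let f : [x, 2x] → (0,∞) be continuous with s ↦ s·f(s) nondecreasing, and let v : [x,2x] → ℝ be continuous with v(s) ≤ 2ε·s·f(s) for all s. If f(2x) = ∫ₓ^{2x} s^{−2}·v(s) ds + f(x), then f(2x) ≤ (1 − 2ε)^{−1}·f(x). -/
/-!
Since `s f(s)` is nondecreasing, `v(s) ≤ 2ε s f(s) ≤ 2ε (2x) f(2x)` on `[x, 2x]`, and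
`∫ₓ^{2x} s⁻² ds = 1/(2x)`, so the integral is at most `2ε f(2x)`. Hence
`f(2x) ≤ 2ε f(2x) + f(x)`, i.e. `(1 - 2ε) f(2x) ≤ f(x)`.
-/

open Set intervalIntegral Interval

lemma integral_rpow_neg_two {a b : ℝ} (ha : 0 < a) (hab : a ≤ b) :
    ∫ s in a..b, s ^ (-(2:ℝ)) = a⁻¹ - b⁻¹ := by
  have h0 : (0:ℝ) ∉ [[a, b]] := by
    rw [uIcc_of_le hab]
    exact fun h => ha.not_ge h.1
  rw [integral_rpow (Or.inr ⟨by norm_num, h0⟩)]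
  norm_num [Real.rpow_neg_one]
  ring

lemma integral_rpow_neg_two_mul_le {a b M : ℝ} {v : ℝ → ℝ} (ha : 0 < a) (hab : a ≤ b)
    (hv : ContinuousOn v (Icc a b)) (hvM : ∀ s ∈ Icc a b, v s ≤ M) :
    ∫ s in a..b, s ^ (-(2:ℝ)) * v s ≤ M * (a⁻¹ - b⁻¹) := by
  have hpow : ContinuousOn (fun s : ℝ => s ^ (-(2:ℝ))) (Icc a b) :=
    continuousOn_id.rpow_const fun s hs => Or.inl (ha.trans_le hs.1).ne'
  calc ∫ s in a..b, s ^ (-(2:ℝ)) * v s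
      ≤ ∫ s in a..b, M * s ^ (-(2:ℝ)) := by
        refine integral_mono_on hab ?_ ?_ fun s hs => ?_
        · exact (hpow.mul hv).intervalIntegrable_of_Icc hab
        · exact (continuousOn_const.mul hpow).intervalIntegrable_of_Icc hab
        rw [mul_comm M]
        exact mul_le_mul_of_nonneg_left (hvM s hs) (Real.rpow_nonneg (ha.trans_le hs.1).le _)
    _ = M * (a⁻¹ - b⁻¹) := by rw [integral_const_mul, integral_rpow_neg_two ha hab]

theorem stmt_9_general (x ε : ℝ) (hx : 0 < x) (hε : ε ∈ Set.Ioo (0:ℝ) (1/2))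
    (f v : ℝ → ℝ)
    (hmono : ∀ s ∈ Set.Icc x (2*x), ∀ t ∈ Set.Icc x (2*x), s ≤ t → s * f s ≤ t * f t)
    (hv : ContinuousOn v (Set.Icc x (2*x)))
    (hvb : ∀ s ∈ Set.Icc x (2*x), v s ≤ 2 * ε * s * f s)
    (heq : f (2*x) = (∫ s in x..(2*x), s ^ (-(2:ℝ)) * v s) + f x) :
    f (2*x) ≤ (1 - 2*ε)⁻¹ * f x := by
  have hle : x ≤ 2 * x := by linarith
  have hvM : ∀ s ∈ Icc x (2 * x), v s ≤ 2 * ε * (2 * x * f (2 * x)) := fun s hs => by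
    have := hmono s hs (2 * x) ⟨hle, le_rfl⟩ hs.2
    nlinarith [hvb s hs, hε.1]
  have hintegral_le := integral_rpow_neg_two_mul_le hx hle hv hvM
  have hval : 2 * ε * (2 * x * f (2 * x)) * (x⁻¹ - (2 * x)⁻¹) = 2 * ε * f (2 * x) := by
    field_simp
    ring
  rw [le_inv_mul_iff₀ (by linarith [hε.2])]
  linarith

/-- Dyadic contraction step (4.11)–(4.12) in the proof of Proposition 4.6. -/
theorem stmt_9 (x ε : ℝ) (hx : 0 < x) (hε : ε ∈ Set.Ioo (0:ℝ) (1/2))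
    (f v : ℝ → ℝ)
    (hf : ContinuousOn f (Set.Icc x (2*x)))
    (hfpos : ∀ s ∈ Set.Icc x (2*x), 0 < f s)
    (hmono : ∀ s ∈ Set.Icc x (2*x), ∀ t ∈ Set.Icc x (2*x), s ≤ t → s * f s ≤ t * f t)
    (hv : ContinuousOn v (Set.Icc x (2*x)))
    (hvb : ∀ s ∈ Set.Icc x (2*x), v s ≤ 2 * ε * s * f s)
    (heq : f (2*x) = (∫ s in x..(2*x), s ^ (-(2:ℝ)) * v s) + f x) :
    f (2*x) ≤ (1 - 2*ε)⁻¹ * f x :=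
  stmt_9_general x ε hx hε f v hmono hv hvb heq
end

section
/- Let r₀ > 0, K > 0, and ε ∈ (0, 1/10]. Let f : [r₀, ∞) → (0, ∞) be continuous with s ↦ s·f(s) nondecreasing, and let v : [r₀, ∞) → ℝ be continuous such that for all x ≥ r₀: f(x) = ∫_{r₀}^x s^{−2}·v(s) ds + f(r₀), v(s) ≤ 2ε·s·f(s), and |v(s)| ≤ K·s^{2/3}·f(s)^{4/3}. Then f is bounded on [r₀, ∞). -/
/-!
Since `f' = s⁻² v ≤ 2ε f / s`, the function `f(x) x^{-2ε}` is nonincreasing, so `f` grows at most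
like `x^{2ε}`. Feeding this into `|v| ≤ K s^{2/3} f^{4/3}` gives `f' ≤ M s^{-4/3 + 8ε/3}`, and the
exponent is `< -1` because `ε < 1/8`: `f'` has an integrable majorant on `[r₀, ∞)`.
-/

open MeasureTheory Set intervalIntegral

theorem hasDerivAt_of_eq_integral_add {a C x : ℝ} {F g : ℝ → ℝ} (hg : ContinuousOn g (Ici a))
    (hF : ∀ y ∈ Ici a, F y = (∫ s in a..y, g s) + C) (hx : a < x) :
    HasDerivAt F (g x) x := by
  have hmem : Ioi a ∈ nhds x := isOpen_Ioi.mem_nhds hx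
  have hg' : ContinuousOn g (Ioi a) := hg.mono Ioi_subset_Ici_self
  have hint : IntervalIntegrable g volume a x :=
    (hg.mono (by rw [uIcc_of_le hx.le]; exact Icc_subset_Ici_self)).intervalIntegrable
  refine (integral_hasDerivAt_right hint (hg'.stronglyMeasurableAtFilter isOpen_Ioi x hx)
    (hg'.continuousAt hmem)).add_const C |>.congr_of_eventuallyEq ?_
  filter_upwards [hmem] with y hy using hF y (mem_Ici.mpr hy.le)

theorem antitoneOn_mul_rpow_neg_of_deriv_le {a c : ℝ} {f f' : ℝ → ℝ} (ha : 0 < a)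
    (hf : ContinuousOn f (Ici a)) (hderiv : ∀ x, a < x → HasDerivAt f (f' x) x)
    (hle : ∀ x, a < x → f' x ≤ c * f x / x) :
    AntitoneOn (fun x => f x * x ^ (-c)) (Ici a) := by
  have hpos : ∀ x ∈ Ici a, 0 < x := fun x hx => ha.trans_le hx
  have hd : ∀ x, a < x → HasDerivAt (fun x => f x * x ^ (-c))
      (f' x * x ^ (-c) + f x * (-c * x ^ (-c - 1))) x := fun x hx =>
    (hderiv x hx).mul (Real.hasDerivAt_rpow_const (Or.inl (hpos x hx.le).ne'))
  refine antitoneOn_of_deriv_nonpos (convex_Ici a)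
    (hf.mul (continuousOn_id.rpow_const fun x hx => Or.inl (hpos x hx).ne')) ?_ ?_
  · intro x hx
    rw [interior_Ici] at hx
    exact (hd x hx).differentiableAt.differentiableWithinAt
  · intro x hx
    rw [interior_Ici] at hx
    have hx0 : 0 < x := hpos x (mem_Ici.mpr hx.le)
    have hsplit : f' x * x ^ (-c) + f x * (-c * x ^ (-c - 1))
        = x ^ (-c) * (f' x - c * f x / x) := by
      rw [Real.rpow_sub_one hx0.ne']; field_simp; ring
    rw [(hd x hx).deriv, hsplit]
    exact mul_nonpos_of_nonneg_of_nonpos (Real.rpow_nonneg hx0.le _)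
      (sub_nonpos.mpr (hle x hx))

theorem le_mul_rpow_of_deriv_le {a c : ℝ} {f f' : ℝ → ℝ} (ha : 0 < a)
    (hf : ContinuousOn f (Ici a)) (hderiv : ∀ x, a < x → HasDerivAt f (f' x) x)
    (hle : ∀ x, a < x → f' x ≤ c * f x / x) {x : ℝ} (hx : a ≤ x) :
    f x ≤ f a * a ^ (-c) * x ^ c := by
  have hx0 : 0 < x := ha.trans_le hx
  calc f x = f x * x ^ (-c) * x ^ c := by
        rw [mul_assoc, ← Real.rpow_add hx0, neg_add_cancel, Real.rpow_zero, mul_one]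
    _ ≤ f a * a ^ (-c) * x ^ c :=
        mul_le_mul_of_nonneg_right
          (antitoneOn_mul_rpow_neg_of_deriv_le ha hf hderiv hle self_mem_Ici hx hx)
          (Real.rpow_nonneg hx0.le _)

theorem integral_rpow_le_of_lt_neg_one {a x p : ℝ} (ha : 0 < a) (hx : a ≤ x) (hp : p < -1) :
    ∫ s in a..x, s ^ p ≤ a ^ (p + 1) / -(p + 1) := by
  have h0 : (0 : ℝ) ∉ uIcc a x := by
    rw [uIcc_of_le hx]; exact fun h => (ha.trans_le h.1).false
  rw [integral_rpow (Or.inr ⟨hp.ne, h0⟩), div_neg, ← neg_div]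
  refine div_le_div_of_nonpos_of_le (by linarith) ?_
  linarith [Real.rpow_pos_of_pos (ha.trans_le hx) (p + 1)]

theorem le_of_eq_integral_add_of_le_rpow {a M p : ℝ} {f g : ℝ → ℝ} (ha : 0 < a) (hM : 0 ≤ M)
    (hp : p < -1) (hg : ContinuousOn g (Ici a))
    (hf : ∀ x ∈ Ici a, f x = (∫ s in a..x, g s) + f a)
    (hgle : ∀ s ∈ Ici a, g s ≤ M * s ^ p) {x : ℝ} (hx : a ≤ x) :
    f x ≤ f a + M * (a ^ (p + 1) / -(p + 1)) := by
  have hIcc : Icc a x ⊆ Ici a := Icc_subset_Ici_self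
  have hmaj : ContinuousOn (fun s => M * s ^ p) (Ici a) :=
    (continuousOn_id.rpow_const fun s hs => Or.inl (ha.trans_le hs).ne').const_smul M
  have hmono : ∫ s in a..x, g s ≤ ∫ s in a..x, M * s ^ p :=
    integral_mono_on hx ((hg.mono hIcc).intervalIntegrable_of_Icc hx)
      ((hmaj.mono hIcc).intervalIntegrable_of_Icc hx) fun s hs => hgle s hs.1
  rw [intervalIntegral.integral_const_mul] at hmono
  rw [hf x hx]
  linarith [mul_le_mul_of_nonneg_left (integral_rpow_le_of_lt_neg_one ha hx hp) hM]

theorem rpow_neg_two_mul_le_of_abs_le {s K C e w y : ℝ} (hs : 0 < s) (hK : 0 ≤ K) (hy : 0 ≤ y)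
    (hyC : y ≤ C * s ^ e) (hw : |w| ≤ K * s ^ ((2:ℝ)/3) * y ^ ((4:ℝ)/3)) :
    s ^ (-(2:ℝ)) * w ≤ K * C ^ ((4:ℝ)/3) * s ^ (-(4:ℝ)/3 + 4 * e / 3) := by
  have hC : 0 ≤ C := nonneg_of_mul_nonneg_left (hy.trans hyC) (Real.rpow_pos_of_pos hs e)
  have hy43 : y ^ ((4:ℝ)/3) ≤ C ^ ((4:ℝ)/3) * s ^ (4 * e / 3) := by
    calc y ^ ((4:ℝ)/3) ≤ (C * s ^ e) ^ ((4:ℝ)/3) := Real.rpow_le_rpow hy hyC (by norm_num)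
      _ = C ^ ((4:ℝ)/3) * s ^ (4 * e / 3) := by
        rw [Real.mul_rpow hC (Real.rpow_nonneg hs.le _), ← Real.rpow_mul hs.le]; ring_nf
  have hexp : s ^ (-(2:ℝ)) * s ^ ((2:ℝ)/3) * s ^ (4 * e / 3) = s ^ (-(4:ℝ)/3 + 4 * e / 3) := by
    rw [← Real.rpow_add hs, ← Real.rpow_add hs]; ring_nf
  have hs2 : 0 ≤ s ^ (-(2:ℝ)) := Real.rpow_nonneg hs.le _
  calc s ^ (-(2:ℝ)) * w ≤ s ^ (-(2:ℝ)) * (K * s ^ ((2:ℝ)/3) * y ^ ((4:ℝ)/3)) :=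
        mul_le_mul_of_nonneg_left ((le_abs_self w).trans hw) hs2
    _ ≤ s ^ (-(2:ℝ)) * (K * s ^ ((2:ℝ)/3) * (C ^ ((4:ℝ)/3) * s ^ (4 * e / 3))) := by gcongr
    _ = K * C ^ ((4:ℝ)/3) * s ^ (-(4:ℝ)/3 + 4 * e / 3) := by rw [← hexp]; ring

theorem stmt_19_general (r₀ K ε : ℝ) (hr₀ : 0 < r₀) (hK : 0 < K)
    (hε : ε ∈ Set.Ioc (0:ℝ) (1/10))
    (f v : ℝ → ℝ)
    (hf : ContinuousOn f (Set.Ici r₀))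
    (hfpos : ∀ s ∈ Set.Ici r₀, 0 < f s)
    (hv : ContinuousOn v (Set.Ici r₀))
    (heq : ∀ x ∈ Set.Ici r₀, f x = (∫ s in r₀..x, s ^ (-(2:ℝ)) * v s) + f r₀)
    (hv1 : ∀ s ∈ Set.Ici r₀, v s ≤ 2 * ε * s * f s)
    (hv2 : ∀ s ∈ Set.Ici r₀, |v s| ≤ K * s ^ ((2:ℝ)/3) * (f s) ^ ((4:ℝ)/3)) :
    ∃ C, ∀ x ∈ Set.Ici r₀, f x ≤ C := by
  obtain ⟨-, hε1⟩ := hε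
  have hpos : ∀ s ∈ Ici r₀, 0 < s := fun s hs => hr₀.trans_le hs
  have hg : ContinuousOn (fun s => s ^ (-(2:ℝ)) * v s) (Ici r₀) :=
    (continuousOn_id.rpow_const fun s hs => Or.inl (hpos s hs).ne').mul hv
  have hg_le : ∀ s, r₀ < s → s ^ (-(2:ℝ)) * v s ≤ 2 * ε * f s / s := by
    intro s hs
    have hs0 := hpos s hs.le
    calc s ^ (-(2:ℝ)) * v s ≤ s ^ (-(2:ℝ)) * (2 * ε * s * f s) :=
          mul_le_mul_of_nonneg_left (hv1 s hs.le) (Real.rpow_nonneg hs0.le _)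
      _ = 2 * ε * f s / s := by
          rw [Real.rpow_neg hs0.le, Real.rpow_two]; field_simp
  set C := f r₀ * r₀ ^ (-(2 * ε))
  have hC : 0 ≤ C := by have := hfpos r₀ self_mem_Ici; positivity
  have hgrowth : ∀ s ∈ Ici r₀, f s ≤ C * s ^ (2 * ε) := fun s hs =>
    le_mul_rpow_of_deriv_le hr₀ hf (fun x hx => hasDerivAt_of_eq_integral_add hg heq hx) hg_le hs
  refine ⟨_, fun x hx => le_of_eq_integral_add_of_le_rpow (M := K * C ^ ((4:ℝ)/3))
    (p := -(4:ℝ)/3 + 4 * (2 * ε) / 3) hr₀ (by positivity) (by linarith) hg heq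
    (fun s hs => ?_) hx⟩
  exact rpow_neg_two_mul_le_of_abs_le (hpos s hs) hK.le (hfpos s hs).le (hgrowth s hs) (hv2 s hs)

/-- The analytic mechanism of the proof of Proposition 4.6: the integral
identity and the two bounds on `v` force `f` to be bounded on `[r₀, ∞)`. -/
theorem stmt_19 (r₀ K ε : ℝ) (hr₀ : 0 < r₀) (hK : 0 < K)
    (hε : ε ∈ Set.Ioc (0:ℝ) (1/10))
    (f v : ℝ → ℝ)
    (hf : ContinuousOn f (Set.Ici r₀))
    (hfpos : ∀ s ∈ Set.Ici r₀, 0 < f s)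
    (hmono : ∀ s ∈ Set.Ici r₀, ∀ t ∈ Set.Ici r₀, s ≤ t → s * f s ≤ t * f t)
    (hv : ContinuousOn v (Set.Ici r₀))
    (heq : ∀ x ∈ Set.Ici r₀, f x = (∫ s in r₀..x, s ^ (-(2:ℝ)) * v s) + f r₀)
    (hv1 : ∀ s ∈ Set.Ici r₀, v s ≤ 2 * ε * s * f s)
    (hv2 : ∀ s ∈ Set.Ici r₀, |v s| ≤ K * s ^ ((2:ℝ)/3) * (f s) ^ ((4:ℝ)/3)) :
    ∃ C, ∀ x ∈ Set.Ici r₀, f x ≤ C :=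
  stmt_19_general r₀ K ε hr₀ hK hε f v hf hfpos hv heq hv1 hv2
end
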